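/- arXiv:0806.2038 — 7 statements merged into one kernel-verified Lean document; each statement's English description precedes it below -/
import Mathlib

section
/- Let k be a field of characteristic zero, let n ≥ 0, and let A be an integral domain containing k that is a unique factorization domain, whose fraction field has transcendence degree n+1 over k, and with A* = k*. Let D_1, …, D_n be pairwise commuting locally nilpotent k-derivations of A, linearly independent over A, and let f ∈ A \ k be such that the common kernel A^{D_1,…,D_n} equals k[f]. If there exist s_1, …, s_n ∈ A with D_i(s_i) = 1 and D_j(s_i) = 0 for j ≠ i, then s_1, …, s_n, f are algebraically independent over k and generate A as a k-algebra; in particular A is k-isomorphic to a polynomial ring in n+1 variables over k. -/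
/-!
If a locally nilpotent derivation `D` has a slice `s` (`D s = 1`) and preserves a subalgebra
`K ∋ s`, then `K ⊆ (K ∩ ker D)[s]`: when `D^[m+2] a = 0`, both `D a` and `(m + 1) • a - s * D a`
are killed by `D^[m+1]`, and together with `s` they give back `a`. For commuting `D i`, the
common kernel `K_S` of the `D i` with `i ∉ S` is preserved by every `D i`, and
`K_{S ∪ {i}} ∩ ker D i = K_S`, so induction on `S` gives `A = k[f][s_1, …, s_n]`. A domain of
transcendence degree `n + 1` generated by `n + 1` elements has them as a transcendence basis.
-/

/-- A derivation is locally nilpotent if every element is killed by some iterate. -/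
def Derivation.IsLocallyNilpotent {k A : Type*} [CommRing k] [CommRing A] [Algebra k A]
    (D : Derivation k A A) : Prop :=
  ∀ a : A, ∃ m : ℕ, 1 ≤ m ∧ (fun x => D x)^[m] a = 0

namespace Derivation

section CommRing

variable {k A ι : Type*} [CommRing k] [CommRing A] [Algebra k A]

def commonKer (D : ι → Derivation k A A) (S : Set ι) : Subalgebra k A where
  carrier := {a | ∀ i ∈ S, D i a = 0}
  mul_mem' ha hb i hi := by simp [ha i hi, hb i hi]
  add_mem' ha hb i hi := by simp [ha i hi, hb i hi]
  algebraMap_mem' r i _ := (D i).map_algebraMap r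

@[simp]
theorem mem_commonKer {D : ι → Derivation k A A} {S : Set ι} {a : A} :
    a ∈ commonKer D S ↔ ∀ i ∈ S, D i a = 0 :=
  Iff.rfl

theorem iterate_succ_slice_mul (D : Derivation k A A) {s : A} (hs : D s = 1) (x : A) (m : ℕ) :
    D^[m + 1] (s * x) = s * D^[m + 1] x + (m + 1) • D^[m] x := by
  induction m with
  | zero => simp [hs, add_comm]
  | succ m ih =>
    rw [Function.iterate_succ_apply' _ (m + 1), ih, Function.iterate_succ_apply' _ (m + 1),
      Function.iterate_succ_apply' _ m, map_add, map_nsmul, leibniz, hs, smul_eq_mul, smul_eq_mul]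
    simp only [nsmul_eq_mul, Nat.cast_add]
    ring

end CommRing

section Field

variable {k A ι : Type*} [Field k] [CharZero k] [CommRing A] [Algebra k A]

theorem le_of_slice (D : Derivation k A A) (hD : D.IsLocallyNilpotent) {s : A} (hs : D s = 1)
    {K T : Subalgebra k A} (hsK : s ∈ K) (hK : ∀ a ∈ K, D a ∈ K) (hsT : s ∈ T)
    (hKT : ∀ a ∈ K, D a = 0 → a ∈ T) : K ≤ T := by
  have key : ∀ m : ℕ, ∀ a ∈ K, D^[m + 1] a = 0 → a ∈ T := by
    intro m
    induction m with
    | zero => exact hKT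
    | succ m ih =>
      intro a ha h
      have hDa : D a ∈ T := ih (D a) (hK a ha) (by rwa [← Function.iterate_succ_apply])
      have hb : (m + 1) • a - s * D a ∈ T := by
        refine ih _ (sub_mem (nsmul_mem ha _) (mul_mem hsK (hK a ha))) ?_
        rw [iterate_map_sub, iterate_map_nsmul, iterate_succ_slice_mul D hs]
        simp only [← Function.iterate_succ_apply, h, mul_zero, zero_add, sub_self]
      have hm : ((m + 1 : ℕ) : k) ≠ 0 := Nat.cast_ne_zero.mpr m.succ_ne_zero
      have := T.smul_mem (add_mem hb (mul_mem hsT hDa)) ((m + 1 : ℕ) : k)⁻¹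
      rwa [sub_add_cancel, ← Nat.cast_smul_eq_nsmul k, inv_smul_smul₀ hm] at this
  intro a ha
  obtain ⟨m, hm, ham⟩ := hD a
  obtain ⟨m, rfl⟩ := Nat.exists_eq_add_of_le' hm
  exact key m a ha ham

theorem subalgebra_eq_top_of_slices [Finite ι] (D : ι → Derivation k A A)
    (hD : ∀ i, (D i).IsLocallyNilpotent) (hcomm : ∀ i j, ∀ x : A, D i (D j x) = D j (D i x))
    (s : ι → A) (hs : ∀ i, D i (s i) = 1) (hs' : ∀ i j, j ≠ i → D j (s i) = 0)
    {T : Subalgebra k A} (hsT : ∀ i, s i ∈ T) (hkerT : commonKer D Set.univ ≤ T) : T = ⊤ := by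
  suffices h : ∀ S : Set ι, S.Finite → commonKer D Sᶜ ≤ T by
    rw [eq_top_iff]
    exact fun a _ => h Set.univ Set.finite_univ (by simp)
  intro S hS
  induction S, hS using Set.Finite.induction_on with
  | empty => simpa using hkerT
  | @insert i S _ _ ih =>
    refine le_of_slice (D i) (hD i) (hs i) (fun j hj => hs' i j ?_) (fun a ha j hj => ?_)
      (hsT i) (fun a ha hDa => ih fun j hj => ?_)
    · rintro rfl; exact hj (Set.mem_insert j S)
    · rw [hcomm, ha j hj, map_zero]
    · by_cases hji : j = i
      · rwa [hji]
      · exact ha j fun h => hj (Set.mem_of_mem_insert_of_ne h hji)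

end Field

end Derivation

section TranscendenceDegree

open Cardinal

universe u v

variable {k : Type*} {A : Type u} [Field k] [CommRing A] [IsDomain A] [Algebra k A]

theorem trdeg_fractionRing : Algebra.trdeg k (FractionRing A) = Algebra.trdeg k A := by
  have := IsLocalization.isAlgebraic (FractionRing A) (nonZeroDivisors A)
  rw [← trdeg_add_eq k A (A := FractionRing A), trdeg_eq_zero (R := A), add_zero]

theorem algebraicIndependent_of_adjoin_eq_top {ι : Type v} [Finite ι] {g : ι → A}
    (hg : Algebra.adjoin k (Set.range g) = ⊤)
    (h : lift.{u} #ι ≤ lift.{v} (Algebra.trdeg k A)) : AlgebraicIndependent k g := by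
  have : Algebra.IsAlgebraic (Algebra.adjoin k (Set.range g)) A :=
    ⟨fun a => isAlgebraic_algebraMap (⟨a, hg ▸ trivial⟩ : Algebra.adjoin k (Set.range g))⟩
  exact (Algebra.IsAlgebraic.isTranscendenceBasis_of_lift_le_trdeg_of_finite k g h).1

end TranscendenceDegree

theorem statement2_general (k : Type*) [Field k] [CharZero k] (n : ℕ)
    (A : Type*) [CommRing A] [IsDomain A] [Algebra k A]
    (htrdeg : ∃ b : Fin (n + 1) → FractionRing A, IsTranscendenceBasis k b)
    (D : Fin n → Derivation k A A)
    (hLN : ∀ i, (D i).IsLocallyNilpotent)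
    (hcomm : ∀ i j, ∀ x : A, D i (D j x) = D j (D i x))
    (f : A)
    (hker : {a : A | ∀ i, D i a = 0} = (Algebra.adjoin k {f} : Subalgebra k A))
    (s : Fin n → A)
    (hs : ∀ i, D i (s i) = 1)
    (hs' : ∀ i j, j ≠ i → D j (s i) = 0) :
    AlgebraicIndependent k (Fin.snoc s f : Fin (n + 1) → A) ∧
      Algebra.adjoin k (Set.range (Fin.snoc s f : Fin (n + 1) → A)) = ⊤ := by
  have hgen : Algebra.adjoin k (Set.range (Fin.snoc s f : Fin (n + 1) → A)) = ⊤ := by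
    refine Derivation.subalgebra_eq_top_of_slices D hLN hcomm s hs hs'
      (fun i => Algebra.subset_adjoin ⟨i.castSucc, Fin.snoc_castSucc ..⟩) fun a ha => ?_
    have haf : a ∈ Algebra.adjoin k {f} := by
      rw [← SetLike.mem_coe, ← hker]
      exact fun i => ha i trivial
    refine Algebra.adjoin_mono ?_ haf
    exact Set.singleton_subset_iff.mpr ⟨Fin.last n, Fin.snoc_last ..⟩
  obtain ⟨b, hb⟩ := htrdeg
  exact ⟨algebraicIndependent_of_adjoin_eq_top hgen
    (trdeg_fractionRing (k := k) (A := A) ▸ hb.lift_cardinalMk_eq_trdeg).le, hgen⟩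

theorem statement2 (k : Type*) [Field k] [CharZero k] (n : ℕ)
    (A : Type*) [CommRing A] [IsDomain A] [UniqueFactorizationMonoid A] [Algebra k A]
    (htrdeg : ∃ b : Fin (n + 1) → FractionRing A, IsTranscendenceBasis k b)
    (hunits : ∀ a : A, IsUnit a → ∃ c : k, algebraMap k A c = a)
    (D : Fin n → Derivation k A A)
    (hLN : ∀ i, (D i).IsLocallyNilpotent)
    (hcomm : ∀ i j, ∀ x : A, D i (D j x) = D j (D i x))
    (hindep : ∀ a : Fin n → A,
      (∀ x : A, ∑ i, a i * D i x = 0) → ∀ i, a i = 0)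
    (f : A) (hf : f ∉ (algebraMap k A).range)
    (hker : {a : A | ∀ i, D i a = 0} = (Algebra.adjoin k {f} : Subalgebra k A))
    (s : Fin n → A)
    (hs : ∀ i, D i (s i) = 1)
    (hs' : ∀ i j, j ≠ i → D j (s i) = 0) :
    AlgebraicIndependent k (Fin.snoc s f : Fin (n + 1) → A) ∧
      Algebra.adjoin k (Set.range (Fin.snoc s f : Fin (n + 1) → A)) = ⊤ :=
  statement2_general k n A htrdeg D hLN hcomm f hker s hs hs'
end

section
/- Let k be a field of characteristic zero and A a commutative k-algebra that is an integral domain. Let D be a locally nilpotent k-derivation of A and suppose there exists s ∈ A with D(s) = 1. Then A is generated, as a ring, by the kernel of D together with s; that is, A = A^D[s], where A^D = {a ∈ A : D(a) = 0}. -/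
/-!
If `D s = 1` and `D^[n+1] a = 0`, then `c = D^[n] a` is a constant and `D^[n] (s ^ n) = n!`, so
`a - c s ^ n / n!` is killed by `D^[n]`. Induction on the nilpotency order writes every `a` as a
polynomial in `s` with coefficients in the kernel of `D`.
-/

namespace Derivation

section CommRing

variable {R A : Type*} [CommRing R] [CommRing A] [Algebra R A] (D : Derivation R A A)

theorem iterate_mul_of_apply_eq_zero {c : A} (hc : D c = 0) (x : A) (n : ℕ) :
    (fun y => D y)^[n] (c * x) = c * (fun y => D y)^[n] x := by
  induction n with
  | zero => rfl
  | succ n ih =>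
    rw [Function.iterate_succ_apply', Function.iterate_succ_apply', ih, D.leibniz, hc,
      smul_zero, add_zero, smul_eq_mul]

theorem iterate_pow_of_apply_eq_one {s : A} (hs : D s = 1) (n : ℕ) :
    (fun y => D y)^[n] (s ^ n) = n.factorial := by
  induction n with
  | zero => simp
  | succ n ih =>
    have hDpow : D (s ^ (n + 1)) = ((n + 1 : ℕ) : A) * s ^ n := by
      simp [D.leibniz_pow, hs, nsmul_eq_mul]
    rw [Function.iterate_succ_apply, hDpow,
      D.iterate_mul_of_apply_eq_zero (D.map_natCast _), ih, Nat.factorial_succ, Nat.cast_mul]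

end CommRing

variable {k A : Type*} [Field k] [CharZero k] [CommRing A] [Algebra k A] (D : Derivation k A A)

theorem mem_adjoin_ker_insert_of_iterate_eq_zero {s : A} (hs : D s = 1) (n : ℕ) :
    ∀ a : A, (fun y => D y)^[n] a = 0 → a ∈ Algebra.adjoin k ({a : A | D a = 0} ∪ {s}) := by
  set S := Algebra.adjoin k ({a : A | D a = 0} ∪ {s})
  induction n with
  | zero =>
    rintro a rfl
    exact S.zero_mem
  | succ n ih =>
    intro a ha
    set c := (fun y => D y)^[n] a
    set t := algebraMap k A (n.factorial : k)⁻¹ * c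
    have hDt : D t = 0 := by
      rw [D.leibniz, D.map_algebraMap, ← Function.iterate_succ_apply' (fun y => D y), ha]
      simp
    have htS : t ∈ S := Algebra.subset_adjoin (Or.inl hDt)
    have hsS : s ∈ S := Algebra.subset_adjoin (Or.inr rfl)
    have hcoeff : t * (n.factorial : A) = c := by
      rw [mul_comm, ← _root_.map_natCast (algebraMap k A), ← mul_assoc, ← map_mul,
        mul_inv_cancel₀ (Nat.cast_ne_zero.mpr n.factorial_ne_zero), map_one, one_mul]
    have hrest : (fun y => D y)^[n] (a - t * s ^ n) = 0 := by
      rw [iterate_map_sub D, D.iterate_mul_of_apply_eq_zero hDt,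
        D.iterate_pow_of_apply_eq_one hs, hcoeff, sub_self]
    have hdecomp : a = (a - t * s ^ n) + t * s ^ n := (sub_add_cancel _ _).symm
    rw [hdecomp]
    exact add_mem (ih _ hrest) (mul_mem htS (pow_mem hsS n))

end Derivation

theorem statement3_general (k : Type*) [Field k] [CharZero k]
    (A : Type*) [CommRing A] [Algebra k A]
    (D : Derivation k A A) (hLN : D.IsLocallyNilpotent)
    (s : A) (hs : D s = 1) :
    Algebra.adjoin k ({a : A | D a = 0} ∪ {s}) = ⊤ := by
  refine eq_top_iff.mpr fun a _ => ?_
  obtain ⟨m, -, hm⟩ := hLN a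
  exact D.mem_adjoin_ker_insert_of_iterate_eq_zero hs m a hm

theorem statement3 (k : Type*) [Field k] [CharZero k]
    (A : Type*) [CommRing A] [IsDomain A] [Algebra k A]
    (D : Derivation k A A) (hLN : D.IsLocallyNilpotent)
    (s : A) (hs : D s = 1) :
    Algebra.adjoin k ({a : A | D a = 0} ∪ {s}) = ⊤ :=
  statement3_general k A D hLN s hs
end

section
/- Let k be a field of characteristic zero, let n ≥ 1, and let A be an integral domain containing k that is a unique factorization domain, whose fraction field has transcendence degree n+1 over k, and with A* = k*. Let D_1, …, D_n be pairwise commuting locally nilpotent k-derivations of A, linearly independent over A, and let f ∈ A \ k with A^{D_1,…,D_n} = k[f]. For each i define 𝒫_i := {p ∈ A : D_j(p) = 0 for all j ≠ i, and D_i(p) ∈ k[f]}. Then there exists a nonzero polynomial q_i ∈ k[X] such that the image set D_i(𝒫_i) = {D_i(p) : p ∈ 𝒫_i} equals q_i(f)·k[f], the set of all multiples of q_i(f) inside k[f]. Moreover, if p_i ∈ 𝒫_i is chosen so that D_i(p_i) = g(f) with g ∈ k[X] nonzero of lowest possible degree, then D_i(p_i) is a nonzero scalar multiple of q_i(f). 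-/
/-!
The polynomials `g` with `g(f) ∈ D_i(𝒫_i)` form an ideal of `k[X]`, because `𝒫_i` is a
`k[f]`-module on which `D_i` is `k[f]`-linear; `q_i` is its generator, and a nonzero element of
least degree is associated to it. The ideal is nonzero because some `p ∈ 𝒫_i` has `D_i p ≠ 0`:
otherwise `D_i` vanishes on the common kernel of the `D_j`, `j ≠ i`, and then `t • D_i` is an
`A`-linear combination of those `D_j` for some `t ≠ 0`, against linear independence.

That last step goes one derivation at a time. If `D` is locally nilpotent, `r` a local slice
(`D r ≠ 0`, `D (D r) = 0`) and `E` kills `ker D`, then the derivation `D r • E - E r • D` kills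
`r` and `ker D`, hence kills everything: an `a` with `D^[m+1] a = 0` is reduced to elements of
lower nilpotency order, `D a` and `m • D r * a - r * D a`. So `D r • E = E r • D`.
-/

open Polynomial Set

namespace Derivation

variable {R A : Type*} [CommRing R] [CommRing A] [Algebra R A]

def kerSubalgebra (D : Derivation R A A) : Subalgebra R A where
  carrier := {x | D x = 0}
  mul_mem' {a b} ha hb := by simp_all [leibniz]
  add_mem' {a b} ha hb := by simp_all
  algebraMap_mem' c := D.map_algebraMap c

lemma sum_apply {ι : Type*} (S : Finset ι) (G : ι → Derivation R A A) (x : A) :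
    (∑ j ∈ S, G j) x = ∑ j ∈ S, G j x := by
  rw [← coeFnAddMonoidHom_apply, map_sum, Finset.sum_apply]
  rfl

section SingleDerivation

variable {D : Derivation R A A}

lemma iterate_mul_of_apply_eq_zero_s5 {s : A} (hs : D s = 0) (m : ℕ) (x : A) :
    (⇑D)^[m] (s * x) = s * (⇑D)^[m] x :=
  Function.Commute.iterate_left (g := (s * ·)) (fun y => by simp [leibniz, hs]) m x

lemma iterate_mul_apply_of_apply_apply_eq_zero {r : A} (hr : D (D r) = 0) (m : ℕ) (x : A) :
    (⇑D)^[m] (r * D x) = r * (⇑D)^[m + 1] x + m • (D r * (⇑D)^[m] x) := by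
  induction m with
  | zero => simp
  | succ m ih =>
    rw [Function.iterate_succ_apply', ih, map_add, map_nsmul, leibniz, leibniz, hr,
      ← Function.iterate_succ_apply' D (m + 1), ← Function.iterate_succ_apply' D m]
    simp only [smul_eq_mul, mul_zero, add_zero, succ_nsmul]
    ring

lemma IsLocallyNilpotent.exists_iterate_slice (hD : D.IsLocallyNilpotent) {b : A}
    (hb : D b ≠ 0) : ∃ l, D ((⇑D)^[l] b) ≠ 0 ∧ D (D ((⇑D)^[l] b)) = 0 := by
  obtain ⟨m, -, hm⟩ := hD b
  induction m generalizing b with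
  | zero => exact absurd (show b = 0 from hm) (by rintro rfl; exact hb D.map_zero)
  | succ m ih =>
    by_cases hDb : D (D b) = 0
    · exact ⟨0, hb, hDb⟩
    · obtain ⟨l, hl⟩ := ih hDb hm
      exact ⟨l + 1, hl⟩

variable [IsDomain A] [CharZero A] {W : Subalgebra R A} {r : A}

lemma IsLocallyNilpotent.apply_eq_zero_of_slice (hD : D.IsLocallyNilpotent)
    (hW : MapsTo D W W) (hrW : r ∈ W) (hr : D r ≠ 0) (hr2 : D (D r) = 0)
    {F : Derivation R A A} (hFr : F r = 0) (hF : ∀ x ∈ W, D x = 0 → F x = 0)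
    {a : A} (ha : a ∈ W) : F a = 0 := by
  obtain ⟨m, hm, hma⟩ := hD a
  obtain ⟨m, rfl⟩ := Nat.exists_eq_add_of_le' hm
  clear hm
  induction m generalizing a with
  | zero => exact hF a ha hma
  | succ m ih =>
    set s := (m + 1) • D r
    have hsW : s ∈ W := nsmul_mem (hW hrW) _
    have hFs : F s = 0 := hF s hsW (by simp [s, hr2])
    have hFDa : F (D a) = 0 := ih (hW ha) hma
    have hFa' : F (s * a - r * D a) = 0 := by
      refine ih (sub_mem (mul_mem hsW ha) (mul_mem hrW (hW ha))) ?_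
      rw [iterate_map_sub, iterate_mul_of_apply_eq_zero_s5 (by simp [s, hr2]),
        iterate_mul_apply_of_apply_apply_eq_zero hr2,
        show (⇑D)^[m + 1 + 1] a = 0 from hma, mul_zero, zero_add, smul_mul_assoc, sub_self]
    have hsFa : s * F a = 0 := by simpa [leibniz, hFs, hFr, hFDa] using hFa'
    exact (mul_eq_zero.1 hsFa).resolve_left (smul_ne_zero (Nat.succ_ne_zero m) hr)

lemma IsLocallyNilpotent.mul_apply_eq_of_slice (hD : D.IsLocallyNilpotent)
    (hW : MapsTo D W W) (hrW : r ∈ W) (hr : D r ≠ 0) (hr2 : D (D r) = 0)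
    {E : Derivation R A A} (hE : ∀ x ∈ W, D x = 0 → E x = 0) {a : A} (ha : a ∈ W) :
    D r * E a = E r * D a := by
  have := hD.apply_eq_zero_of_slice hW hrW hr hr2 (F := D r • E - E r • D)
    (by simp [mul_comm]) (fun x hxW hx => by simp [hE x hxW hx, hx]) ha
  simpa [sub_eq_zero] using this

lemma IsLocallyNilpotent.exists_mul_apply_eq_mul_apply (hD : D.IsLocallyNilpotent)
    (hW : MapsTo D W W) {E : Derivation R A A} (hE : ∀ x ∈ W, D x = 0 → E x = 0) :
    ∃ s ≠ 0, ∃ c, ∀ x ∈ W, s * E x = c * D x := by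
  by_cases hDW : ∀ x ∈ W, D x = 0
  · exact ⟨1, one_ne_zero, 0, fun x hx => by simp [hE x hx (hDW x hx)]⟩
  push Not at hDW
  obtain ⟨b, hbW, hb⟩ := hDW
  obtain ⟨l, hr, hr2⟩ := hD.exists_iterate_slice hb
  exact ⟨_, hr, _, fun x hx => hD.mul_apply_eq_of_slice hW (hW.iterate l hbW) hr hr2 hE hx⟩

end SingleDerivation

variable [IsDomain A] [CharZero A] {W : Subalgebra R A} {ι : Type*} {D : ι → Derivation R A A}

theorem exists_mul_apply_eq_sum_of_isLocallyNilpotent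
    (hD : ∀ j, (D j).IsLocallyNilpotent) (hcomm : ∀ i j, ∀ x, D i (D j x) = D j (D i x))
    (E : Derivation R A A) (S : Finset ι) (hW : ∀ j, MapsTo (D j) W W)
    (hE : ∀ x ∈ W, (∀ j ∈ S, D j x = 0) → E x = 0) :
    ∃ t ≠ 0, ∃ u : ι → A, ∀ x ∈ W, t * E x = ∑ j ∈ S, u j * D j x := by
  classical
  induction S using Finset.induction_on generalizing W with
  | empty => exact ⟨1, one_ne_zero, 0, fun x hx => by simp [hE x hx (by simp)]⟩
  | @insert j₁ S hj₁ ih =>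
    obtain ⟨t, ht, u, hu⟩ := ih (W := W ⊓ (D j₁).kerSubalgebra)
      (fun j x hx => ⟨hW j hx.1, show D j₁ (D j x) = 0 by
        rw [hcomm j₁ j, show D j₁ x = 0 from hx.2, map_zero]⟩)
      (fun x hx hS => hE x hx.1 (Finset.forall_mem_insert _ _ _ |>.2 ⟨hx.2, hS⟩))
    obtain ⟨s, hs, c, hsc⟩ := (hD j₁).exists_mul_apply_eq_mul_apply (hW j₁)
      (E := t • E - ∑ j ∈ S, u j • D j) (fun x hxW hx => by
        simpa [sub_eq_zero, sum_apply] using hu x ⟨hxW, hx⟩)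
    refine ⟨s * t, mul_ne_zero hs ht, Function.update (s • u) j₁ c, fun x hx => ?_⟩
    have hscx := hsc x hx
    simp only [sub_apply, smul_apply, sum_apply, smul_eq_mul] at hscx
    have hupd : ∀ j ∈ S, Function.update (s • u) j₁ c j * D j x = s * (u j * D j x) :=
      fun j hj => by simp [Function.update_of_ne (ne_of_mem_of_not_mem hj hj₁), mul_assoc]
    rw [Finset.sum_insert hj₁, Function.update_self, ← hscx, Finset.sum_congr rfl hupd,
      ← Finset.mul_sum]
    ring

variable [Fintype ι] [DecidableEq ι]

theorem exists_apply_ne_zero_of_linearIndependent (hD : ∀ j, (D j).IsLocallyNilpotent)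
    (hcomm : ∀ i j, ∀ x, D i (D j x) = D j (D i x))
    (hindep : ∀ a : ι → A, (∀ x, ∑ j, a j * D j x = 0) → ∀ j, a j = 0) (i : ι) :
    ∃ b, (∀ j, j ≠ i → D j b = 0) ∧ D i b ≠ 0 := by
  by_contra! h
  obtain ⟨t, ht, u, hu⟩ := exists_mul_apply_eq_sum_of_isLocallyNilpotent hD hcomm (D i)
    (Finset.univ.erase i) (W := ⊤) (fun _ _ _ => trivial)
    (fun x _ hx => h x fun j hj => hx j (by simpa using hj))
  refine ht ?_
  have := hindep (Function.update (-u) i t) (fun x => ?_) i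
  · simpa using this
  rw [← Finset.add_sum_erase _ _ (Finset.mem_univ i), Function.update_self, hu x trivial,
    ← Finset.sum_add_distrib]
  refine Finset.sum_eq_zero fun j hj => ?_
  simp [Function.update_of_ne (Finset.ne_of_mem_erase hj)]

theorem exists_local_slice_of_linearIndependent (hD : ∀ j, (D j).IsLocallyNilpotent)
    (hcomm : ∀ i j, ∀ x, D i (D j x) = D j (D i x))
    (hindep : ∀ a : ι → A, (∀ x, ∑ j, a j * D j x = 0) → ∀ j, a j = 0) (i : ι) :
    ∃ p, (∀ j, j ≠ i → D j p = 0) ∧ (∀ j, D j (D i p) = 0) ∧ D i p ≠ 0 := by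
  obtain ⟨b, hb, hbi⟩ := exists_apply_ne_zero_of_linearIndependent hD hcomm hindep i
  obtain ⟨l, hr, hr2⟩ := (hD i).exists_iterate_slice hbi
  have hp : ∀ j, j ≠ i → D j ((⇑(D i))^[l] b) = 0 := fun j hj => by
    rw [← Function.Commute.iterate_left (f := D i) (g := D j) (fun x => hcomm i j x) l b, hb j hj,
      iterate_map_zero]
  refine ⟨_, hp, fun j => ?_, hr⟩
  obtain rfl | hj := eq_or_ne j i
  · exact hr2
  · rw [hcomm, hp j hj, map_zero]

end Derivation

namespace Polynomial

variable {K A : Type*} [Field K] [CommRing A] [Algebra K A]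

lemma exists_C_mul_eq_of_dvd_of_degree_le {q g : K[X]} (hqg : q ∣ g) (hg : g ≠ 0)
    (hdeg : g.degree ≤ q.degree) : ∃ c ≠ 0, g = C c * q := by
  obtain ⟨u, hu⟩ := associated_of_dvd_of_natDegree_le hqg hg (natDegree_le_natDegree hdeg)
  obtain ⟨c, hc, hcu⟩ := isUnit_iff.1 u.isUnit
  exact ⟨c, hc.ne_zero, by rw [← hu, hcu, mul_comm]⟩

open Submodule.IsPrincipal in
lemma eq_setOf_aeval_generator_mul {f : A} {V : Set A} (hV : V ⊆ Algebra.adjoin K {f})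
    {I : Ideal K[X]} (hI : ∀ g, g ∈ I ↔ aeval f g ∈ V) :
    V = {x | ∃ g : K[X], x = aeval f (generator I) * aeval f g} := by
  ext x
  constructor
  · intro hx
    obtain ⟨g, rfl⟩ := Algebra.adjoin_singleton_eq_range_aeval K f ▸ hV hx
    obtain ⟨h, rfl⟩ := (mem_iff_generator_dvd I).1 ((hI g).2 hx)
    exact ⟨h, map_mul _ _ _⟩
  · rintro ⟨g, rfl⟩
    rw [← map_mul, ← hI, mul_comm]
    exact I.mul_mem_left g (generator_mem I)

end Polynomial

section SliceSet

variable {k A ι : Type*} [CommRing k] [CommRing A] [Algebra k A]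

lemma Derivation.apply_aeval_mul {E : Derivation k A A} {f : A} (hf : E f = 0) (c : k[X])
    (x : A) : E (aeval f c * x) = aeval f c * E x := by
  simp [leibniz, map_aeval, hf]

def sliceSet (D : ι → Derivation k A A) (f : A) (i : ι) : Set A :=
  {p | (∀ j, j ≠ i → D j p = 0) ∧ D i p ∈ Algebra.adjoin k {f}}

variable {D : ι → Derivation k A A} {f : A}

lemma aeval_mul_mem_sliceSet (hf : ∀ j, D j f = 0) {i : ι} (c : k[X]) {p : A}
    (hp : p ∈ sliceSet D f i) : aeval f c * p ∈ sliceSet D f i := by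
  refine ⟨fun j hj => by rw [Derivation.apply_aeval_mul (hf j), hp.1 j hj, mul_zero], ?_⟩
  rw [Derivation.apply_aeval_mul (hf i)]
  exact mul_mem (aeval_mem_adjoin_singleton k f) hp.2

lemma exists_ideal_mem_iff_mem_image_sliceSet (hf : ∀ j, D j f = 0) (i : ι) :
    ∃ I : Ideal k[X], ∀ g, g ∈ I ↔ aeval f g ∈ D i '' sliceSet D f i :=
  ⟨{ carrier := {g | aeval f g ∈ D i '' sliceSet D f i}
     zero_mem' := ⟨0, ⟨by simp, by simp⟩, by simp⟩
     add_mem' := by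
       rintro g h ⟨p, hp, hpg⟩ ⟨p', hp', hph⟩
       refine ⟨p + p', ⟨fun j hj => by simp [hp.1 j hj, hp'.1 j hj], ?_⟩, by simp [hpg, hph]⟩
       rw [map_add]
       exact add_mem hp.2 hp'.2
     smul_mem' := by
       rintro c g ⟨p, hp, hpg⟩
       exact ⟨aeval f c * p, aeval_mul_mem_sliceSet hf c hp,
         by simp [Derivation.apply_aeval_mul (hf i), hpg]⟩ }, fun _ => Iff.rfl⟩

end SliceSet

theorem statement5_general (k : Type*) [Field k] [CharZero k] (n : ℕ)
    (A : Type*) [CommRing A] [IsDomain A] [Algebra k A]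
    (D : Fin n → Derivation k A A)
    (hLN : ∀ i, (D i).IsLocallyNilpotent)
    (hcomm : ∀ i j, ∀ x : A, D i (D j x) = D j (D i x))
    (hindep : ∀ a : Fin n → A,
      (∀ x : A, ∑ i, a i * D i x = 0) → ∀ i, a i = 0)
    (f : A)
    (hker : {a : A | ∀ i, D i a = 0} = (Algebra.adjoin k {f} : Subalgebra k A))
    (P : Fin n → Set A)
    (hP : ∀ i, P i = {p : A | (∀ j, j ≠ i → D j p = 0) ∧
      D i p ∈ Algebra.adjoin k {f}}) :
    ∀ i, ∃ q : Polynomial k, q ≠ 0 ∧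
      ((D i : A → A) '' P i =
        {x : A | ∃ g : Polynomial k, x = Polynomial.aeval f q * Polynomial.aeval f g}) ∧
      (∀ p ∈ P i, ∀ g : Polynomial k, g ≠ 0 → D i p = Polynomial.aeval f g →
        (∀ p' ∈ P i, ∀ g' : Polynomial k, g' ≠ 0 → D i p' = Polynomial.aeval f g' →
          g.degree ≤ g'.degree) →
        ∃ c : k, c ≠ 0 ∧ D i p = c • (Polynomial.aeval f q : A)) := by
  intro i
  obtain rfl : P = sliceSet D f := funext hP
  have : CharZero A := charZero_of_injective_algebraMap (algebraMap k A).injective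
  have hker' : ∀ x, (∀ j, D j x = 0) ↔ x ∈ Algebra.adjoin k {f} := Set.ext_iff.1 hker
  have hf : ∀ j, D j f = 0 := (hker' f).2 (Algebra.self_mem_adjoin_singleton k f)
  obtain ⟨I, hI⟩ := exists_ideal_mem_iff_mem_image_sliceSet hf i
  have himage := eq_setOf_aeval_generator_mul
    (V := D i '' sliceSet D f i) (fun _ ⟨_, hp, hpx⟩ => hpx ▸ hp.2) hI
  set q := Submodule.IsPrincipal.generator I
  obtain ⟨p₀, hp₀, hp₀ker, hp₀ne⟩ :=
    Derivation.exists_local_slice_of_linearIndependent hLN hcomm hindep i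
  have hq : q ≠ 0 := by
    rintro hq
    have hmem : D i p₀ ∈ D i '' sliceSet D f i := ⟨p₀, ⟨hp₀, (hker' _).1 hp₀ker⟩, rfl⟩
    obtain ⟨g, hg⟩ := himage ▸ hmem
    exact hp₀ne (by simpa [hq] using hg)
  refine ⟨q, hq, himage, fun p hp g hg hpg hmin => ?_⟩
  obtain ⟨pq, hpq, hpqq⟩ := (hI q).1 (Submodule.IsPrincipal.generator_mem I)
  obtain ⟨c, hc, rfl⟩ := exists_C_mul_eq_of_dvd_of_degree_le
    ((Submodule.IsPrincipal.mem_iff_generator_dvd I).1 ((hI g).2 ⟨p, hp, hpg⟩)) hg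
    (hmin pq hpq q hq hpqq)
  exact ⟨c, hc, by rw [hpg, map_mul, aeval_C, Algebra.smul_def]⟩

theorem statement5 (k : Type*) [Field k] [CharZero k] (n : ℕ) (hn : 1 ≤ n)
    (A : Type*) [CommRing A] [IsDomain A] [UniqueFactorizationMonoid A] [Algebra k A]
    (htrdeg : ∃ b : Fin (n + 1) → FractionRing A, IsTranscendenceBasis k b)
    (hunits : ∀ a : A, IsUnit a → ∃ c : k, algebraMap k A c = a)
    (D : Fin n → Derivation k A A)
    (hLN : ∀ i, (D i).IsLocallyNilpotent)
    (hcomm : ∀ i j, ∀ x : A, D i (D j x) = D j (D i x))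
    (hindep : ∀ a : Fin n → A,
      (∀ x : A, ∑ i, a i * D i x = 0) → ∀ i, a i = 0)
    (f : A) (hf : f ∉ (algebraMap k A).range)
    (hker : {a : A | ∀ i, D i a = 0} = (Algebra.adjoin k {f} : Subalgebra k A))
    (P : Fin n → Set A)
    (hP : ∀ i, P i = {p : A | (∀ j, j ≠ i → D j p = 0) ∧
      D i p ∈ Algebra.adjoin k {f}}) :
    ∀ i, ∃ q : Polynomial k, q ≠ 0 ∧
      ((D i : A → A) '' P i =
        {x : A | ∃ g : Polynomial k, x = Polynomial.aeval f q * Polynomial.aeval f g}) ∧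
      (∀ p ∈ P i, ∀ g : Polynomial k, g ≠ 0 → D i p = Polynomial.aeval f g →
        (∀ p' ∈ P i, ∀ g' : Polynomial k, g' ≠ 0 → D i p' = Polynomial.aeval f g' →
          g.degree ≤ g'.degree) →
        ∃ c : k, c ≠ 0 ∧ D i p = c • (Polynomial.aeval f q : A)) :=
  statement5_general k n A D hLN hcomm hindep f hker P hP
end

section
/- Let k be a field of characteristic zero, let n ≥ 1, and let A be an integral domain containing k that is a unique factorization domain, whose fraction field has transcendence degree n+1 over k, and with A* = k*. Let D_1, …, D_n be pairwise commuting locally nilpotent k-derivations of A, linearly independent over A, and let f ∈ A \ k with A^{D_1,…,D_n} = k[f]. Then the set {α ∈ k : D_1, …, D_n are linearly dependent modulo (f − α)} is finite. -/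
/-- A family of derivations is linearly independent modulo an ideal `I` if any `A`-linear
combination of them taking all its values in `I` has all coefficients in `I`. -/
def LinIndepModulo {k A : Type*} [CommRing k] [CommRing A] [Algebra k A] {n : ℕ}
    (D : Fin n → Derivation k A A) (I : Ideal A) : Prop :=
  ∀ a : Fin n → A, (∀ x : A, ∑ i, a i * D i x ∈ I) → ∀ i, a i ∈ I

open Finset Matrix Polynomial

namespace Derivation

variable {R A : Type*} [CommRing R] [CommRing A] [Algebra R A] (D : Derivation R A A)

theorem iterate_map_mul (a b : A) (m : ℕ) :
    (⇑D)^[m] (a * b) =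
      ∑ ij ∈ antidiagonal m, m.choose ij.1 • ((⇑D)^[ij.1] a * (⇑D)^[ij.2] b) := by
  induction m with
  | zero => simp
  | succ m ih =>
    rw [sum_antidiagonal_choose_succ_nsmul (fun i j => (⇑D)^[i] a * (⇑D)^[j] b),
      Function.iterate_succ_apply', ih, map_sum, add_comm, ← sum_add_distrib]
    refine sum_congr rfl fun ij hij => ?_
    rw [Nat.choose_symm_of_eq_add (mem_antidiagonal.1 hij).symm, map_nsmul, leibniz,
      smul_eq_mul, smul_eq_mul, ← smul_add, Function.iterate_succ_apply',
      Function.iterate_succ_apply', add_comm, mul_comm]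

theorem iterate_map_mul_of_iterate_succ_eq_zero {a b : A} {p q : ℕ}
    (ha : (⇑D)^[p + 1] a = 0) (hb : (⇑D)^[q + 1] b = 0) :
    (⇑D)^[p + q] (a * b) = (p + q).choose p • ((⇑D)^[p] a * (⇑D)^[q] b) := by
  have vanish : ∀ {c : A} {r i : ℕ}, (⇑D)^[r + 1] c = 0 → r < i → (⇑D)^[i] c = 0 := by
    intro c r i hc hri
    rw [← Nat.sub_add_cancel hri, Function.iterate_add_apply, hc, iterate_map_zero]
  rw [iterate_map_mul, sum_eq_single (p, q)]
  · rintro ⟨i, j⟩ hij hne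
    rw [HasAntidiagonal.mem_antidiagonal] at hij
    rcases lt_or_ge p i with hpi | hip
    · rw [vanish ha hpi, zero_mul, smul_zero]
    · have hqj : q < j := by
        by_contra
        exact hne (Prod.ext (by omega) (by omega))
      rw [vanish hb hqj, mul_zero, smul_zero]
  · simp

theorem IsLocallyNilpotent.exists_iterate_ne_zero {D : Derivation R A A}
    (hD : D.IsLocallyNilpotent) {a : A} (ha : a ≠ 0) :
    ∃ p, (⇑D)^[p] a ≠ 0 ∧ (⇑D)^[p + 1] a = 0 := by
  obtain ⟨m, -, hm⟩ := hD a
  induction m with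
  | zero => exact absurd hm ha
  | succ m ih => exact (em ((⇑D)^[m] a = 0)).elim ih fun h => ⟨m, h, hm⟩

theorem IsLocallyNilpotent.apply_eq_zero_of_apply_mul_eq_zero [IsDomain A] [CharZero A]
    {D : Derivation R A A} (hD : D.IsLocallyNilpotent) {a b : A} (ha : a ≠ 0) (hb : b ≠ 0)
    (hab : D (a * b) = 0) : D a = 0 := by
  obtain ⟨p, hpa, hpa'⟩ := hD.exists_iterate_ne_zero ha
  obtain ⟨q, hqb, hqb'⟩ := hD.exists_iterate_ne_zero hb
  have htop := D.iterate_map_mul_of_iterate_succ_eq_zero hpa' hqb'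
  have hchoose : ((p + q).choose p : A) ≠ 0 := Nat.cast_ne_zero.2 (Nat.choose_pos (by omega)).ne'
  rw [nsmul_eq_mul] at htop
  obtain rfl | hp := Nat.eq_zero_or_pos p
  · simpa using hpa'
  · refine absurd htop fun h => mul_ne_zero hchoose (mul_ne_zero hpa hqb) ?_
    rw [← h, ← Nat.sub_add_cancel (show 1 ≤ p + q by omega), Function.iterate_add_apply,
      Function.iterate_one, hab, iterate_map_zero]

end Derivation

section

variable {k A : Type*} [Field k] [CommRing A] [Algebra k A]

theorem transcendental_of_notMem_range [IsDomain A]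
    (hunits : ∀ a : A, IsUnit a → ∃ c : k, algebraMap k A c = a) {f : A}
    (hf : f ∉ (algebraMap k A).range) : Transcendental k f := by
  intro halg
  have hf0 : f ≠ 0 := fun h => hf ⟨0, by rw [h, map_zero]⟩
  obtain ⟨c, hc⟩ := hunits f (halg.isIntegral.isUnit hf0)
  exact hf ⟨c, hc⟩

theorem isUnit_or_isUnit_of_mul_eq_sub_algebraMap {f g h : A} (hf : Transcendental k f)
    (hg : g ∈ Algebra.adjoin k {f}) (hh : h ∈ Algebra.adjoin k {f}) {α : k}
    (hgh : g * h = f - algebraMap k A α) : IsUnit g ∨ IsUnit h := by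
  rw [Algebra.adjoin_singleton_eq_range_aeval] at hg hh
  obtain ⟨G, rfl⟩ := hg
  obtain ⟨H, rfl⟩ := hh
  have hGH : G * H = X - C α := by
    refine sub_eq_zero.1 (transcendental_iff.1 hf _ ?_)
    rw [map_sub, map_mul, map_sub, aeval_X, aeval_C]
    exact sub_eq_zero.2 hgh
  exact ((irreducible_X_sub_C α).isUnit_or_isUnit hGH.symm).imp (·.map _) (·.map _)

theorem eq_of_associated_sub_algebraMap [IsDomain A]
    (hunits : ∀ a : A, IsUnit a → ∃ c : k, algebraMap k A c = a) {f : A}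
    (hf : f ∉ (algebraMap k A).range) {α β : k}
    (h : Associated (f - algebraMap k A α) (f - algebraMap k A β)) : α = β := by
  obtain ⟨u, hu⟩ := h
  obtain ⟨c, hc⟩ := hunits u u.isUnit
  rw [← hc] at hu
  obtain rfl | hc1 := eq_or_ne c 1
  · exact (algebraMap k A).injective (by simpa using hu)
  · refine absurd ⟨(α * c - β) / (c - 1), ?_⟩ hf
    have hc1' : algebraMap k A (c - 1) ≠ 0 := by
      rw [_root_.map_ne_zero]
      exact sub_ne_zero.2 hc1
    refine mul_right_cancel₀ hc1' ?_
    rw [← map_mul, div_mul_cancel₀ _ (sub_ne_zero.2 hc1)]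
    simp only [map_sub, map_mul, map_one]
    linear_combination -hu

end

theorem span_range_eval_eq_top {K X ι : Type*} [Field K] [Fintype ι] {w : ι → X → K}
    (hw : LinearIndependent K w) :
    Submodule.span K (Set.range fun x i => w i x) = ⊤ := by
  classical
  by_contra hne
  obtain ⟨ψ, hψ, hψW⟩ :=
    Submodule.exists_dual_map_eq_bot_of_lt_top (lt_top_iff_ne_top.2 hne) inferInstance
  have hrel : ∑ i, ψ (Pi.single i 1) • w i = 0 := by
    funext x
    have hx : ψ (fun i => w i x) = 0 := by
      rw [← Submodule.mem_bot K, ← hψW]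
      exact Submodule.mem_map_of_mem (Submodule.subset_span ⟨x, rfl⟩)
    have hsingle : ∀ i : ι, (fun j => if i = j then (1 : K) else 0) = Pi.single i 1 :=
      fun i => funext fun j => by rw [Pi.single_comm, Pi.single_apply]
    rw [LinearMap.pi_apply_eq_sum_univ] at hx
    simp_rw [hsingle] at hx
    simpa [Finset.sum_apply, mul_comm] using hx
  exact hψ (LinearMap.pi_ext' fun i => LinearMap.ext_ring
    (Fintype.linearIndependent_iff.1 hw _ hrel i))

theorem exists_det_ne_zero_of_span_eq_top {K X ι : Type*} [Field K] [Fintype ι] [DecidableEq ι]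
    {v : X → ι → K} (hv : Submodule.span K (Set.range v) = ⊤) :
    ∃ x : ι → X, (of fun i j => v (x j) i).det ≠ 0 := by
  obtain ⟨κ, a, -, hspan, hli⟩ := exists_linearIndependent' K v
  rw [hv] at hspan
  let e := (Module.Basis.mk hli hspan.ge).indexEquiv (Pi.basisFun K ι)
  refine ⟨a ∘ e.symm, ?_⟩
  rw [← isUnit_iff_ne_zero, ← isUnit_iff_isUnit_det, ← linearIndependent_cols_iff_isUnit]
  exact hli.comp e.symm e.symm.injective

theorem exists_det_ne_zero_of_linearIndependent {R X ι : Type*} [CommRing R] [IsDomain R]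
    [Fintype ι] [DecidableEq ι] {u : ι → X → R} (hu : LinearIndependent R u) :
    ∃ x : ι → X, (of fun i j => u i (x j)).det ≠ 0 := by
  let K := FractionRing R
  have hK : LinearIndependent K fun i x => algebraMap R K (u i x) := by
    rw [← LinearIndependent.iff_fractionRing R K]
    exact hu.map' (LinearMap.compLeft (Algebra.linearMap R K) X)
      (LinearMap.ker_eq_bot.2 (IsFractionRing.injective R K).comp_left)
  obtain ⟨x, hx⟩ := exists_det_ne_zero_of_span_eq_top (span_range_eval_eq_top hK)
  refine ⟨x, fun h => hx ?_⟩
  rw [← map_zero (algebraMap R K), ← h, RingHom.map_det]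
  rfl

theorem Matrix.det_mul_mem_of_vecMul_mem {R n : Type*} [CommRing R] [Fintype n] [DecidableEq n]
    {I : Ideal R} {M : Matrix n n R} {v : n → R} (hv : ∀ j, (v ᵥ* M) j ∈ I) (i : n) :
    M.det * v i ∈ I := by
  have : M.det • v = v ᵥ* M ᵥ* M.adjugate := by
    rw [vecMul_vecMul, mul_adjugate, vecMul_smul, vecMul_one]
  rw [← smul_eq_mul, ← Pi.smul_apply, this]
  exact I.sum_mem fun j _ => I.mul_mem_right _ (hv j)

theorem UniqueFactorizationMonoid.finite_setOf_dvd {α ι : Type*} [CommMonoidWithZero α]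
    [UniqueFactorizationMonoid α] {g : α} (hg : g ≠ 0) {p : ι → α}
    (hp : ∀ i, Irreducible (p i))
    (hinj : ∀ i j, Associated (p i) (p j) → i = j) : {i | p i ∣ g}.Finite := by
  classical
  refine Set.Finite.of_finite_image (f := Associates.mk ∘ p) ?_
    fun i _ j _ h => hinj i j (Associates.mk_eq_mk_iff_associated.1 h)
  refine ((factors g).map Associates.mk).toFinset.finite_toSet.subset ?_
  rintro _ ⟨i, hi, rfl⟩
  obtain ⟨q, hq, hpq⟩ := exists_mem_factors_of_dvd hg (hp i) hi
  simpa [Associates.mk_eq_mk_iff_associated] using ⟨q, hq, hpq.symm⟩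

theorem prime_sub_algebraMap_of_ker_eq_adjoin {k A ι : Type*} [Field k] [CommRing A] [IsDomain A]
    [CharZero A] [UniqueFactorizationMonoid A] [Algebra k A] {D : ι → Derivation k A A}
    (hLN : ∀ i, (D i).IsLocallyNilpotent)
    (hunits : ∀ a : A, IsUnit a → ∃ c : k, algebraMap k A c = a) {f : A}
    (hf : f ∉ (algebraMap k A).range)
    (hker : {a : A | ∀ i, D i a = 0} = (Algebra.adjoin k {f} : Subalgebra k A)) (α : k) :
    Prime (f - algebraMap k A α) := by
  have hfα : f - algebraMap k A α ∉ (algebraMap k A).range := fun ⟨c, hc⟩ =>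
    hf ⟨c + α, by rw [map_add, hc, sub_add_cancel]⟩
  rw [← UniqueFactorizationMonoid.irreducible_iff_prime]
  refine irreducible_iff.2 ⟨fun hu => hfα (hunits _ hu), fun g h hgh => ?_⟩
  have hne : g * h ≠ 0 := hgh ▸ fun h0 => hfα ⟨0, by rw [map_zero, h0]⟩
  have hDf : f ∈ {a : A | ∀ i, D i a = 0} :=
    hker.superset (Algebra.self_mem_adjoin_singleton k f)
  have hDgh : ∀ i, D i (g * h) = 0 := fun i => by
    rw [← hgh, map_sub, hDf i, (D i).map_algebraMap, sub_zero]
  have hg : g ∈ Algebra.adjoin k {f} := hker.subset fun i =>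
    (hLN i).apply_eq_zero_of_apply_mul_eq_zero (left_ne_zero_of_mul hne)
      (right_ne_zero_of_mul hne) (hDgh i)
  have hh : h ∈ Algebra.adjoin k {f} := hker.subset fun i =>
    (hLN i).apply_eq_zero_of_apply_mul_eq_zero (right_ne_zero_of_mul hne)
      (left_ne_zero_of_mul hne) (mul_comm g h ▸ hDgh i)
  exact isUnit_or_isUnit_of_mul_eq_sub_algebraMap (transcendental_of_notMem_range hunits hf)
    hg hh hgh.symm

theorem dvd_det_of_not_linIndepModulo {k A : Type*} [CommRing k] [CommRing A] [Algebra k A]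
    {n : ℕ} {D : Fin n → Derivation k A A} (x : Fin n → A) {p : A} (hp : Prime p)
    (h : ¬ LinIndepModulo D (Ideal.span {p})) : p ∣ (of fun i j => D i (x j)).det := by
  contrapose! h
  intro a ha i
  have hdet : (of fun i j => D i (x j)).det ∉ Ideal.span {p} := by
    rwa [Ideal.mem_span_singleton]
  exact (((Ideal.span_singleton_prime hp.ne_zero).2 hp).mem_or_mem
    (det_mul_mem_of_vecMul_mem (fun j => ha (x j)) i)).resolve_left hdet

theorem statement8_general (k : Type*) [Field k] [CharZero k] (n : ℕ)
    (A : Type*) [CommRing A] [IsDomain A] [UniqueFactorizationMonoid A] [Algebra k A]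
    (hunits : ∀ a : A, IsUnit a → ∃ c : k, algebraMap k A c = a)
    (D : Fin n → Derivation k A A)
    (hLN : ∀ i, (D i).IsLocallyNilpotent)
    (hindep : ∀ a : Fin n → A,
      (∀ x : A, ∑ i, a i * D i x = 0) → ∀ i, a i = 0)
    (f : A) (hf : f ∉ (algebraMap k A).range)
    (hker : {a : A | ∀ i, D i a = 0} = (Algebra.adjoin k {f} : Subalgebra k A))
    :
    {α : k | ¬ LinIndepModulo D (Ideal.span {f - algebraMap k A α})}.Finite := by
  have : CharZero A := charZero_of_injective_algebraMap (algebraMap k A).injective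
  have hD : LinearIndependent A fun i => ⇑(D i) := Fintype.linearIndependent_iff.2 fun a ha =>
    hindep a fun x => by simpa using congr_fun ha x
  obtain ⟨x, hx⟩ := exists_det_ne_zero_of_linearIndependent hD
  have hprime := prime_sub_algebraMap_of_ker_eq_adjoin hLN hunits hf hker
  exact (UniqueFactorizationMonoid.finite_setOf_dvd hx (fun α => (hprime α).irreducible)
    fun α β => eq_of_associated_sub_algebraMap hunits hf).subset
    fun α hα => dvd_det_of_not_linIndepModulo x (hprime α) hα

theorem statement8 (k : Type*) [Field k] [CharZero k] (n : ℕ) (hn : 1 ≤ n)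
    (A : Type*) [CommRing A] [IsDomain A] [UniqueFactorizationMonoid A] [Algebra k A]
    (htrdeg : ∃ b : Fin (n + 1) → FractionRing A, IsTranscendenceBasis k b)
    (hunits : ∀ a : A, IsUnit a → ∃ c : k, algebraMap k A c = a)
    (D : Fin n → Derivation k A A)
    (hLN : ∀ i, (D i).IsLocallyNilpotent)
    (hcomm : ∀ i j, ∀ x : A, D i (D j x) = D j (D i x))
    (hindep : ∀ a : Fin n → A,
      (∀ x : A, ∑ i, a i * D i x = 0) → ∀ i, a i = 0)
    (f : A) (hf : f ∉ (algebraMap k A).range)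
    (hker : {a : A | ∀ i, D i a = 0} = (Algebra.adjoin k {f} : Subalgebra k A))
    :
    {α : k | ¬ LinIndepModulo D (Ideal.span {f - algebraMap k A α})}.Finite :=
  statement8_general k n A hunits D hLN hindep f hf hker
end

section
/- Let F := X²Y + X + Z² + T³ ∈ ℂ[X, Y, Z, T] and A := ℂ[X, Y, Z, T]/(F), with x the image of X. For α ∈ ℂ, the quotient ℂ-algebra A/(x − α) is ℂ-isomorphic to the polynomial ring in 2 variables over ℂ if and only if α ≠ 0. -/
/-!
For `α ≠ 0` the equation `α² y + α + z² + t³ = 0` of the fibre `x = α` can be solved for `y`, so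
the fibre is the plane with coordinates `z, t`. The fibre `x = 0` is `𝔸¹` times the cusp
`z² + t³ = 0`, which is not smooth: the tangent vector `z = ε, t = 0` over `k[ε]/(ε²)` does not
lift to `k[ε]/(ε³)`, where it would give `0 = z² + t³ ≡ ε²`. A polynomial ring is formally smooth,
so that fibre is not a polynomial ring.
-/

open MvPolynomial

theorem Algebra.not_formallySmooth_of_cusp {R A B : Type*} [CommRing R] [CommRing A]
    [CommRing B] [Algebra R A] [Algebra R B] {ε : B} (hε3 : ε ^ 3 = 0) (hε2 : ε ^ 2 ≠ 0)
    {z t : A} (hzt : z ^ 2 + t ^ 3 = 0) (g : A →ₐ[R] B ⧸ Ideal.span {ε ^ 2})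
    (hgz : g z = Ideal.Quotient.mk _ ε) (hgt : g t = 0) :
    ¬ Algebra.FormallySmooth R A := by
  intro hA
  have hJ : IsNilpotent (Ideal.span {ε ^ 2}) := ⟨2, by
    rw [Ideal.span_singleton_pow, ← pow_mul, Ideal.zero_eq_bot, Ideal.span_singleton_eq_bot,
      show 2 * 2 = 3 + 1 by rfl, pow_succ, hε3, zero_mul]⟩
  let σ := Algebra.FormallySmooth.lift _ hJ g
  obtain ⟨a, ha⟩ := Ideal.mem_span_singleton'.1 <| Ideal.Quotient.eq.1 <|
    (Algebra.FormallySmooth.mk_lift _ hJ g z).trans hgz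
  obtain ⟨b, hb⟩ := Ideal.mem_span_singleton'.1 <| Ideal.Quotient.eq_zero_iff_mem.1 <|
    (Algebra.FormallySmooth.mk_lift _ hJ g t).trans hgt
  have hσ : σ z ^ 2 + σ t ^ 3 = 0 := by rw [← map_pow, ← map_pow, ← map_add, hzt, map_zero]
  exact hε2 (by
    linear_combination hσ - (2 * a + a ^ 2 * ε + b ^ 3 * ε ^ 3) * hε3
      + (σ z + ε + a * ε ^ 2) * ha + (σ t ^ 2 + σ t * b * ε ^ 2 + b ^ 2 * ε ^ 4) * hb)

theorem Polynomial.mk_X_pow_ne_zero {R : Type*} [CommRing R] [Nontrivial R] {m n : ℕ}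
    (h : m < n) :
    Ideal.Quotient.mk (Ideal.span {Polynomial.X ^ n}) (Polynomial.X ^ m : Polynomial R) ≠ 0 := by
  rw [Ne, Ideal.Quotient.eq_zero_iff_mem, Ideal.mem_span_singleton, Polynomial.X_pow_dvd_iff]
  exact fun hc => by simpa using hc m h

theorem map_eq_zero_of_mem_span_pair {A B F : Type*} [CommRing A] [CommRing B] [FunLike F A B]
    [RingHomClass F A B] (f : F) {p q a : A} (hp : f p = 0) (hq : f q = 0)
    (ha : a ∈ Ideal.span {p, q}) : f a = 0 := by
  obtain ⟨c, d, rfl⟩ := Ideal.mem_span_pair.1 ha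
  simp [hp, hq]

noncomputable def DoubleQuot.quotQuotSpanEquivQuotSpanPair (R : Type*) {A : Type*} [CommRing R]
    [CommRing A] [Algebra R A] (p q : A) :
    ((A ⧸ Ideal.span {p}) ⧸ Ideal.span {Ideal.Quotient.mk (Ideal.span {p}) q}) ≃ₐ[R]
      A ⧸ Ideal.span {p, q} :=
  (Ideal.quotientEquivAlgOfEq R (by rw [Ideal.map_span, Set.image_singleton]; rfl)).trans <|
    (DoubleQuot.quotQuotEquivQuotSupₐ R _ _).trans <|
      Ideal.quotientEquivAlgOfEq R (Ideal.span_insert p {q}).symm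

section RussellCubic

variable (K : Type*) [Field K]

noncomputable def russellCubic : MvPolynomial (Fin 4) K :=
  X 0 ^ 2 * X 1 + X 0 + X 2 ^ 2 + X 3 ^ 3

abbrev RussellCubicFiber (α : K) : Type _ :=
  MvPolynomial (Fin 4) K ⧸ Ideal.span {russellCubic K, X 0 - C α}

variable {K}

theorem RussellCubicFiber.not_formallySmooth_zero :
    ¬ Algebra.FormallySmooth K (RussellCubicFiber K 0) := by
  let ε := Ideal.Quotient.mk (Ideal.span {Polynomial.X ^ 3}) (Polynomial.X : Polynomial K)
  have hε3 : ε ^ 3 = 0 := by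
    rw [← map_pow, Ideal.Quotient.eq_zero_iff_mem]
    exact Ideal.mem_span_singleton_self _
  have hε2 : ε ^ 2 ≠ 0 := by
    rw [← map_pow]
    exact Polynomial.mk_X_pow_ne_zero (by norm_num)
  have hε2' : Ideal.Quotient.mk (Ideal.span {ε ^ 2}) ε ^ 2 = 0 :=
    (map_pow _ ε 2).symm.trans (Ideal.Quotient.eq_zero_iff_mem.2 (Ideal.mem_span_singleton_self _))
  let φ : MvPolynomial (Fin 4) K →ₐ[K] _ ⧸ Ideal.span {ε ^ 2} :=
    aeval ![0, 0, Ideal.Quotient.mk _ ε, 0]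
  let g : RussellCubicFiber K 0 →ₐ[K] _ := Ideal.Quotient.liftₐ _ φ fun _ =>
    map_eq_zero_of_mem_span_pair φ (by
      simp only [φ, russellCubic, map_add, map_mul, map_pow, aeval_X, Matrix.cons_val, hε2']
      ring) (by simp [φ])
  let π := Ideal.Quotient.mk (Ideal.span {russellCubic K, X 0 - C 0})
  have hzt : π (X 2) ^ 2 + π (X 3) ^ 3 = 0 := by
    rw [← map_pow, ← map_pow, ← map_add, Ideal.Quotient.eq_zero_iff_mem, Ideal.mem_span_pair]
    exact ⟨1, -(X 0 * X 1 + 1), by simp only [russellCubic, C_0]; ring⟩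
  exact Algebra.not_formallySmooth_of_cusp hε3 hε2 hzt g (by change φ (X 2) = _; simp [φ])
    (by change φ (X 3) = _; simp [φ])

variable {α : K}

local notation "mk" => Ideal.Quotient.mk (Ideal.span {russellCubic K, X 0 - C α})

theorem RussellCubicFiber.mk_X_zero : mk (X 0) = algebraMap K (RussellCubicFiber K α) α := by
  rw [← Ideal.Quotient.mk_algebraMap, MvPolynomial.algebraMap_eq, Ideal.Quotient.eq]
  exact Ideal.subset_span (by simp)

theorem RussellCubicFiber.equation :
    algebraMap K (RussellCubicFiber K α) α ^ 2 * mk (X 1) + algebraMap K _ α + mk (X 2) ^ 2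
      + mk (X 3) ^ 3 = 0 := by
  rw [← mk_X_zero]
  have h : mk (russellCubic K) = 0 := Ideal.Quotient.eq_zero_iff_mem.2 (Ideal.subset_span (by simp))
  rw [russellCubic, map_add, map_add, map_add, map_mul, map_pow, map_pow, map_pow] at h
  exact h

/-- Solving `α² y + α + z² + t³ = 0` for `y`. -/
noncomputable def RussellCubicFiber.toPlane (hα : α ≠ 0) :
    RussellCubicFiber K α →ₐ[K] MvPolynomial (Fin 2) K :=
  Ideal.Quotient.liftₐ _ (aeval ![C α, C (α ^ 2)⁻¹ * (-C α - X 0 ^ 2 - X 1 ^ 3), X 0, X 1])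
    fun _ => map_eq_zero_of_mem_span_pair _
      (by
        have h : (C α : MvPolynomial (Fin 2) K) ^ 2 * C (α ^ 2)⁻¹ = 1 := by
          rw [← C_pow, ← C_mul, mul_inv_cancel₀ (pow_ne_zero 2 hα), C_1]
        simp only [russellCubic, map_add, map_mul, map_pow, aeval_X, Matrix.cons_val]
        linear_combination (-C α - X 0 ^ 2 - X 1 ^ 3) * h)
      (by simp)

theorem RussellCubicFiber.toPlane_mk (hα : α ≠ 0) (p : MvPolynomial (Fin 4) K) :
    toPlane hα (mk p) = aeval ![C α, C (α ^ 2)⁻¹ * (-C α - X 0 ^ 2 - X 1 ^ 3), X 0, X 1] p :=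
  rfl

noncomputable def RussellCubicFiber.ofPlane (α : K) :
    MvPolynomial (Fin 2) K →ₐ[K] RussellCubicFiber K α :=
  aeval ![Ideal.Quotient.mk _ (X 2), Ideal.Quotient.mk _ (X 3)]

noncomputable def RussellCubicFiber.equivPlane (hα : α ≠ 0) :
    RussellCubicFiber K α ≃ₐ[K] MvPolynomial (Fin 2) K :=
  AlgEquiv.ofAlgHom (toPlane hα) (ofPlane α)
    (MvPolynomial.algHom_ext fun i => by fin_cases i <;> simp [ofPlane, toPlane_mk])
    (Ideal.Quotient.algHom_ext _ <| MvPolynomial.algHom_ext fun i => by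
      have hα2 : algebraMap K (RussellCubicFiber K α) (α ^ 2)⁻¹ * algebraMap K _ α ^ 2 = 1 := by
        rw [← map_pow, ← map_mul, inv_mul_cancel₀ (pow_ne_zero 2 hα), map_one]
      fin_cases i <;> simp [ofPlane, toPlane_mk]
      · exact mk_X_zero.symm
      · linear_combination -algebraMap K (RussellCubicFiber K α) (α ^ 2)⁻¹ *
          equation (α := α) + mk (X 1) * hα2)

end RussellCubic

open MvPolynomial in
theorem statement14
    (F : MvPolynomial (Fin 4) ℂ)
    (hF : F = (X 0) ^ 2 * X 1 + X 0 + (X 2) ^ 2 + (X 3) ^ 3)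
    (x : MvPolynomial (Fin 4) ℂ ⧸ Ideal.span {F})
    (hx : x = Ideal.Quotient.mk (Ideal.span {F}) (X 0))
    (α : ℂ) :
    Nonempty (((MvPolynomial (Fin 4) ℂ ⧸ Ideal.span {F}) ⧸
        Ideal.span {x - algebraMap ℂ (MvPolynomial (Fin 4) ℂ ⧸ Ideal.span {F}) α})
      ≃ₐ[ℂ] MvPolynomial (Fin 2) ℂ) ↔ α ≠ 0 := by
  obtain rfl : F = russellCubic ℂ := hF
  have hxα : x - algebraMap ℂ _ α = Ideal.Quotient.mk _ (X 0 - C α) := by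
    rw [hx, map_sub, ← MvPolynomial.algebraMap_eq, Ideal.Quotient.mk_algebraMap]
  let e := DoubleQuot.quotQuotSpanEquivQuotSpanPair ℂ (russellCubic ℂ) (X 0 - C α)
  rw [hxα]
  constructor
  · rintro ⟨f⟩ rfl
    exact RussellCubicFiber.not_formallySmooth_zero (.of_equiv (e.symm.trans f).symm)
  · exact fun hα => ⟨e.trans (RussellCubicFiber.equivPlane hα)⟩
end

section
/- Let F := X²Y + X + Z² + T³ ∈ ℂ[X, Y, Z, T] and A := ℂ[X, Y, Z, T]/(F), with x, y, z, t the images of X, Y, Z, T. Let D_1 and D_2 be the ℂ-derivations of A induced by 2Z ∂/∂Y − X² ∂/∂Z and 3T² ∂/∂Y − X² ∂/∂T respectively. For α ∈ ℂ, the derivations D_1, D_2 are linearly independent modulo (x − α) if and only if α ≠ 0. -/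
/-!
Since `D₁ z = D₂ t = -x²` while `D₂ z = D₁ t = 0`, evaluating `a₁ D₁ + a₂ D₂` at `-z` and `-t`
shows that `a₁ x²` and `a₂ x²` lie in `(x - α)`; modulo `x - α` the element `x²` becomes the unit
`α²` when `α ≠ 0`. For `α = 0`, the combination `3t² D₁ - 2z D₂ = x² (2z ∂_T - 3t² ∂_Z)` vanishes
modulo `x`, but `3t² ∉ (x)`: the point `(0, 0, i, 1)` lies on `F = 0`, where `x = 0` and `3t² = 3`.
-/

open MvPolynomial

section LinearIndependentMod

variable {R A : Type*} [CommRing R] [CommRing A] [Algebra R A]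

def Derivation.LinearIndependentMod (D₁ D₂ : Derivation R A A) (I : Ideal A) : Prop :=
  ∀ a₁ a₂ : A, (∀ w, a₁ * D₁ w + a₂ * D₂ w ∈ I) → a₁ ∈ I ∧ a₂ ∈ I

theorem Derivation.linearIndependentMod_of_isUnit {D₁ D₂ : Derivation R A A} {I : Ideal A}
    {w₁ w₂ : A} (h₂₁ : D₂ w₁ ∈ I) (h₁₂ : D₁ w₂ ∈ I)
    (h₁ : IsUnit (Ideal.Quotient.mk I (D₁ w₁))) (h₂ : IsUnit (Ideal.Quotient.mk I (D₂ w₂))) :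
    D₁.LinearIndependentMod D₂ I := by
  intro a₁ a₂ h
  have hw₁ := h w₁
  have hw₂ := h w₂
  simp only [← Ideal.Quotient.eq_zero_iff_mem, map_add, map_mul] at hw₁ hw₂ h₂₁ h₁₂ ⊢
  rw [h₂₁, mul_zero, add_zero] at hw₁
  rw [h₁₂, mul_zero, zero_add] at hw₂
  exact ⟨h₁.mul_left_eq_zero.mp hw₁, h₂.mul_left_eq_zero.mp hw₂⟩

end LinearIndependentMod

theorem Ideal.isUnit_mk_pow_of_sub_algebraMap_mem {K A : Type*} [Field K] [CommRing A]
    [Algebra K A] {I : Ideal A} {x : A} {c : K} (hc : c ≠ 0)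
    (hx : x - algebraMap K A c ∈ I) (n : ℕ) : IsUnit (Ideal.Quotient.mk I (x ^ n)) := by
  rw [map_pow, Ideal.Quotient.eq.mpr hx, Ideal.Quotient.mk_algebraMap]
  exact ((IsUnit.mk0 c hc).map _).pow n

theorem MvPolynomial.mk_notMem_span_singleton_of_eval {σ K : Type*} [CommRing K]
    {F g r : MvPolynomial σ K} (p : σ → K) (hF : eval p F = 0) (hg : eval p g = 0)
    (hr : eval p r ≠ 0) :
    Ideal.Quotient.mk (Ideal.span {F}) r ∉ Ideal.span {Ideal.Quotient.mk (Ideal.span {F}) g} := by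
  let φ := Ideal.Quotient.lift (Ideal.span {F}) (eval p) fun a ha => by
    obtain ⟨c, rfl⟩ := Ideal.mem_span_singleton'.mp ha
    rw [map_mul, hF, mul_zero]
  intro h
  obtain ⟨c, hc⟩ := Ideal.mem_span_singleton'.mp h
  apply hr
  simpa [φ, hg] using (congrArg φ hc).symm

open MvPolynomial in
theorem statement15
    (F : MvPolynomial (Fin 4) ℂ)
    (hF : F = (X 0) ^ 2 * X 1 + X 0 + (X 2) ^ 2 + (X 3) ^ 3)
    (Dt1 Dt2 : Derivation ℂ (MvPolynomial (Fin 4) ℂ) (MvPolynomial (Fin 4) ℂ))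
    (hDt1 : Dt1 = ((2 : MvPolynomial (Fin 4) ℂ) * X 2) • pderiv (1 : Fin 4) -
      ((X 0 : MvPolynomial (Fin 4) ℂ) ^ 2) • pderiv (2 : Fin 4))
    (hDt2 : Dt2 = ((3 : MvPolynomial (Fin 4) ℂ) * ((X 3 : MvPolynomial (Fin 4) ℂ)) ^ 2) •
      pderiv (1 : Fin 4) - ((X 0 : MvPolynomial (Fin 4) ℂ) ^ 2) • pderiv (3 : Fin 4))
    (D1 D2 : Derivation ℂ (MvPolynomial (Fin 4) ℂ ⧸ Ideal.span {F})
      (MvPolynomial (Fin 4) ℂ ⧸ Ideal.span {F}))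
    (hD1 : ∀ r : MvPolynomial (Fin 4) ℂ,
      D1 (Ideal.Quotient.mk (Ideal.span {F}) r) = Ideal.Quotient.mk (Ideal.span {F}) (Dt1 r))
    (hD2 : ∀ r : MvPolynomial (Fin 4) ℂ,
      D2 (Ideal.Quotient.mk (Ideal.span {F}) r) = Ideal.Quotient.mk (Ideal.span {F}) (Dt2 r))
    (x : MvPolynomial (Fin 4) ℂ ⧸ Ideal.span {F})
    (hx : x = Ideal.Quotient.mk (Ideal.span {F}) (X 0))
    (α : ℂ) :
    (∀ a1 a2 : MvPolynomial (Fin 4) ℂ ⧸ Ideal.span {F},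
      (∀ w, a1 * D1 w + a2 * D2 w ∈
        Ideal.span {x - algebraMap ℂ (MvPolynomial (Fin 4) ℂ ⧸ Ideal.span {F}) α}) →
      a1 ∈ Ideal.span {x - algebraMap ℂ (MvPolynomial (Fin 4) ℂ ⧸ Ideal.span {F}) α} ∧
      a2 ∈ Ideal.span {x - algebraMap ℂ (MvPolynomial (Fin 4) ℂ ⧸ Ideal.span {F}) α})
    ↔ α ≠ 0 := by
  subst hDt1 hDt2 hx
  set mk := Ideal.Quotient.mk (Ideal.span {F})
  change D1.LinearIndependentMod D2 _ ↔ α ≠ 0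
  constructor
  · rintro H rfl
    have hcomb : ∀ w, mk (3 * X 3 ^ 2) * D1 w + mk (-(2 * X 2)) * D2 w ∈
        Ideal.span {mk (X 0)} := by
      intro w
      obtain ⟨r, rfl⟩ := Ideal.Quotient.mk_surjective w
      rw [hD1, hD2, Ideal.mem_span_singleton']
      refine ⟨mk (X 0 * (2 * X 2 * pderiv 3 r - 3 * X 3 ^ 2 * pderiv 2 r)), ?_⟩
      simp only [← map_mul, ← map_add, Derivation.sub_apply, Derivation.smul_apply, smul_eq_mul]
      ring_nf
    rw [map_zero, sub_zero] at H
    refine mk_notMem_span_singleton_of_eval ![0, 0, Complex.I, 1] ?_ ?_ ?_ (H _ _ hcomb).1 <;>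
      simp [hF, Complex.I_sq]
  · intro hα
    have hz : D1 (-mk (X 2)) = mk (X 0) ^ 2 ∧ D2 (-mk (X 2)) = 0 := by
      rw [map_neg, map_neg, hD1, hD2]
      simp [pderiv_X]
    have ht : D1 (-mk (X 3)) = 0 ∧ D2 (-mk (X 3)) = mk (X 0) ^ 2 := by
      rw [map_neg, map_neg, hD1, hD2]
      simp [pderiv_X]
    have hx : mk (X 0) - algebraMap ℂ _ α ∈ Ideal.span {mk (X 0) - algebraMap ℂ _ α} :=
      Ideal.mem_span_singleton_self _
    have hx2 := Ideal.isUnit_mk_pow_of_sub_algebraMap_mem hα hx 2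
    exact Derivation.linearIndependentMod_of_isUnit (hz.2 ▸ zero_mem _) (ht.1 ▸ zero_mem _)
      (hz.1 ▸ hx2) (ht.2 ▸ hx2)
end

section
/- Let A := ℂ[X, Y, Z] be the polynomial ring in three variables and let D_1 := Z ∂/∂X + ∂/∂Y and D_2 := ∂/∂Y. Then D_1 and D_2 are commuting locally nilpotent ℂ-derivations of A, linearly independent over A; their common kernel A^{D_1, D_2} = {a ∈ A : D_1(a) = D_2(a) = 0} equals the ℂ-subalgebra ℂ[Z]; and for α ∈ ℂ, the derivations D_1, D_2 are linearly independent modulo (Z − α) if and only if α ≠ 0. -/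
open MvPolynomial

namespace Derivation

variable {R A : Type*} [CommRing R] [CommRing A] [Algebra R A] (D : Derivation R A A)

theorem iterate_mul_eq_zero {m n : ℕ} {a b : A} (ha : D^[m] a = 0) (hb : D^[n] b = 0) :
    D^[m + n] (a * b) = 0 := by
  induction m generalizing a n b with
  | zero => simp_all
  | succ m ihm =>
    induction n generalizing b with
    | zero => simp_all
    | succ n ihn =>
      have hDab : D (a * b) = a * D b + D a * b := by
        rw [leibniz, smul_eq_mul, smul_eq_mul, mul_comm b]
      rw [show m + 1 + (n + 1) = (m + 1 + n) + 1 by omega, Function.iterate_succ_apply, hDab,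
        iterate_map_add, ihn (by rwa [← Function.iterate_succ_apply]),
        show m + 1 + n = m + (n + 1) by omega, ihm (by rwa [← Function.iterate_succ_apply]) hb,
        add_zero]

theorem iterate_eq_zero_of_le {m k : ℕ} {a : A} (ha : D^[m] a = 0) (hmk : m ≤ k) :
    D^[k] a = 0 := by
  rw [← Nat.sub_add_cancel hmk, Function.iterate_add_apply, ha, iterate_map_zero]

def nilpotentLocus : Subalgebra R A where
  carrier := {a | ∃ m, D^[m] a = 0}
  mul_mem' := fun ⟨m, ha⟩ ⟨n, hb⟩ => ⟨m + n, D.iterate_mul_eq_zero ha hb⟩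
  add_mem' := fun ⟨m, ha⟩ ⟨n, hb⟩ => ⟨max m n, by
    rw [iterate_map_add, D.iterate_eq_zero_of_le ha (le_max_left m n),
      D.iterate_eq_zero_of_le hb (le_max_right m n), add_zero]⟩
  algebraMap_mem' r := ⟨1, by simp⟩

theorem isLocallyNilpotent_of_adjoin_eq_top {s : Set A} (hs : Algebra.adjoin R s = ⊤)
    (h : ∀ x ∈ s, ∃ m, D^[m] x = 0) : D.IsLocallyNilpotent := by
  intro a
  obtain ⟨m, hm⟩ : a ∈ D.nilpotentLocus :=
    Algebra.adjoin_le (S := D.nilpotentLocus) h (hs ▸ Algebra.mem_top)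
  exact ⟨m + 1, m.succ_pos, D.iterate_eq_zero_of_le hm m.le_succ⟩

theorem commute_of_commute_on_X {σ : Type*}
    {D₁ D₂ : Derivation R (MvPolynomial σ R) (MvPolynomial σ R)}
    (h : ∀ i, D₁ (D₂ (X i)) = D₂ (D₁ (X i))) (a : MvPolynomial σ R) :
    D₁ (D₂ a) = D₂ (D₁ a) := by
  have hbracket : ⁅D₁, D₂⁆ = 0 := derivation_ext fun i => by
    rw [commutator_apply, h, sub_self, zero_apply]
  rw [← sub_eq_zero, ← commutator_apply, hbracket, zero_apply]

end Derivation

namespace MvPolynomial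

variable {σ R : Type*}

theorem pderiv_eq_zero_iff_notMem_vars [CommSemiring R] [NoZeroDivisors R] [CharZero R]
    {i : σ} {f : MvPolynomial σ R} : pderiv i f = 0 ↔ i ∉ f.vars := by
  refine ⟨fun h hi => ?_, pderiv_eq_zero_of_notMem_vars⟩
  classical
  obtain ⟨d, hd, hdi⟩ := (mem_vars_iff_mem_support i).mp hi
  have hle : Finsupp.single i 1 ≤ d := Finsupp.single_le_iff.mpr (Nat.one_le_iff_ne_zero.mpr
    (Finsupp.mem_support_iff.mp hdi))
  have hcoeff := coeff_pderiv (i := i) f (d - Finsupp.single i 1)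
  rw [h, coeff_zero, tsub_add_cancel_of_le hle, eq_comm, mul_eq_zero] at hcoeff
  exact hcoeff.elim (mem_support_iff.mp hd) (Nat.cast_add_one_ne_zero _)

theorem forall_mul_pderiv_add_mul_pderiv_mem_iff [CommSemiring R] {i j : σ} (hij : i ≠ j)
    (I : Ideal (MvPolynomial σ R)) (b c : MvPolynomial σ R) :
    (∀ w, b * pderiv i w + c * pderiv j w ∈ I) ↔ b ∈ I ∧ c ∈ I := by
  refine ⟨fun h => ⟨?_, ?_⟩, fun ⟨hb, hc⟩ w =>
    I.add_mem (I.mul_mem_right _ hb) (I.mul_mem_right _ hc)⟩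
  · simpa [pderiv_X_of_ne hij] using h (X i)
  · simpa [pderiv_X_of_ne hij.symm] using h (X j)

theorem one_notMem_span_X [CommSemiring R] [Nontrivial R] (i : σ) :
    (1 : MvPolynomial σ R) ∉ Ideal.span {X i} := by
  intro h
  obtain ⟨q, hq⟩ := Ideal.mem_span_singleton'.mp h
  simpa using congrArg constantCoeff hq

theorem pderiv_isLocallyNilpotent [CommRing R] (i : σ) :
    (pderiv i : Derivation R (MvPolynomial σ R) (MvPolynomial σ R)).IsLocallyNilpotent := by
  refine Derivation.isLocallyNilpotent_of_adjoin_eq_top _ adjoin_range_X ?_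
  rintro _ ⟨j, rfl⟩
  refine ⟨2, ?_⟩
  obtain rfl | hji := eq_or_ne j i <;> simp [pderiv_X_of_ne, *]

end MvPolynomial

theorem Ideal.mem_span_sub_algebraMap_of_mul_mem {K A : Type*} [Field K] [CommRing A]
    [Algebra K A] {x a : A} {α : K} (hα : α ≠ 0)
    (h : a * x ∈ Ideal.span {x - algebraMap K A α}) : a ∈ Ideal.span {x - algebraMap K A α} := by
  have hinv : algebraMap K A α⁻¹ * algebraMap K A α = 1 := by
    rw [← map_mul, inv_mul_cancel₀ hα, map_one]
  have ha : a = algebraMap K A α⁻¹ * (a * x - a * (x - algebraMap K A α)) := by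
    linear_combination (-a) * hinv
  rw [ha]
  exact Ideal.mul_mem_left _ _
    (Ideal.sub_mem _ h (Ideal.mul_mem_left _ _ (Ideal.mem_span_singleton_self _)))

section Shear

variable (R : Type*) [CommRing R]

noncomputable def shear : Derivation R (MvPolynomial (Fin 3) R) (MvPolynomial (Fin 3) R) :=
  (X 2 : MvPolynomial (Fin 3) R) • pderiv 0 + pderiv 1

variable {R}

theorem shear_apply (w : MvPolynomial (Fin 3) R) :
    shear R w = X 2 * pderiv 0 w + pderiv 1 w := by
  rw [shear, Derivation.add_apply, Derivation.smul_apply, smul_eq_mul]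

theorem shear_pderiv_one_comm (a : MvPolynomial (Fin 3) R) :
    shear R (pderiv 1 a) = pderiv 1 (shear R a) := by
  refine Derivation.commute_of_commute_on_X (fun i => ?_) a
  fin_cases i <;> simp [shear_apply, pderiv_X]

theorem shear_isLocallyNilpotent : (shear R).IsLocallyNilpotent := by
  refine Derivation.isLocallyNilpotent_of_adjoin_eq_top _ adjoin_range_X ?_
  rintro _ ⟨i, rfl⟩
  refine ⟨2, ?_⟩
  fin_cases i <;> simp [shear_apply, pderiv_X]

theorem shear_eq_zero_and_pderiv_one_eq_zero_iff [IsDomain R] [CharZero R]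
    {a : MvPolynomial (Fin 3) R} :
    shear R a = 0 ∧ pderiv 1 a = 0 ↔ a ∈ Algebra.adjoin R {X 2} := by
  have hvars : (↑a.vars : Set (Fin 3)) ⊆ {2} ↔ 0 ∉ a.vars ∧ 1 ∉ a.vars := by
    simp [Set.subset_def, Fin.forall_fin_succ]
  rw [← Set.image_singleton, ← supported_eq_adjoin_X, mem_supported, hvars,
    ← pderiv_eq_zero_iff_notMem_vars, ← pderiv_eq_zero_iff_notMem_vars, shear_apply]
  constructor
  · rintro ⟨h0, h1⟩
    rw [h1, add_zero, mul_eq_zero] at h0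
    exact ⟨h0.resolve_left (X_ne_zero 2), h1⟩
  · rintro ⟨h0, h1⟩
    simp [h0, h1]

theorem forall_mul_shear_add_mul_pderiv_one_mem_iff (I : Ideal (MvPolynomial (Fin 3) R))
    (a₁ a₂ : MvPolynomial (Fin 3) R) :
    (∀ w, a₁ * shear R w + a₂ * pderiv 1 w ∈ I) ↔ a₁ * X 2 ∈ I ∧ a₁ + a₂ ∈ I := by
  have hcomb (w : MvPolynomial (Fin 3) R) : a₁ * shear R w + a₂ * pderiv 1 w =
      a₁ * X 2 * pderiv 0 w + (a₁ + a₂) * pderiv 1 w := by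
    rw [shear_apply]; ring
  simp only [hcomb]
  exact forall_mul_pderiv_add_mul_pderiv_mem_iff (by decide) I _ _

theorem shear_pderiv_one_linearIndependent [IsDomain R] (a₁ a₂ : MvPolynomial (Fin 3) R)
    (h : ∀ w, a₁ * shear R w + a₂ * pderiv 1 w = 0) : a₁ = 0 ∧ a₂ = 0 := by
  obtain ⟨h₁, h₁₂⟩ := (forall_mul_shear_add_mul_pderiv_one_mem_iff ⊥ a₁ a₂).mp h
  have ha₁ : a₁ = 0 := (mul_eq_zero.mp h₁).resolve_right (X_ne_zero 2)
  exact ⟨ha₁, by simpa [ha₁] using h₁₂⟩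

theorem shear_pderiv_one_linearIndependent_mod_iff {K : Type*} [Field K] (α : K) :
    (∀ a₁ a₂ : MvPolynomial (Fin 3) K,
      (∀ w, a₁ * shear K w + a₂ * pderiv 1 w ∈ Ideal.span {X 2 - algebraMap K _ α}) →
      a₁ ∈ Ideal.span {X 2 - algebraMap K _ α} ∧ a₂ ∈ Ideal.span {X 2 - algebraMap K _ α}) ↔
      α ≠ 0 := by
  simp only [forall_mul_shear_add_mul_pderiv_one_mem_iff]
  constructor
  · rintro h rfl
    have h₁ := (h 1 (-1) (by simp)).1
    rw [map_zero, sub_zero] at h₁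
    exact one_notMem_span_X 2 h₁
  · rintro hα a₁ a₂ ⟨h₁, h₁₂⟩
    have ha₁ := Ideal.mem_span_sub_algebraMap_of_mul_mem hα h₁
    exact ⟨ha₁, by simpa using Ideal.sub_mem _ h₁₂ ha₁⟩

end Shear

open MvPolynomial in
theorem statement16
    (D1 D2 : Derivation ℂ (MvPolynomial (Fin 3) ℂ) (MvPolynomial (Fin 3) ℂ))
    (hD1 : D1 = (X 2 : MvPolynomial (Fin 3) ℂ) • pderiv (0 : Fin 3) + pderiv (1 : Fin 3))
    (hD2 : D2 = pderiv (1 : Fin 3)) :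
    (∀ a, D1 (D2 a) = D2 (D1 a)) ∧
    D1.IsLocallyNilpotent ∧ D2.IsLocallyNilpotent ∧
    (∀ a1 a2 : MvPolynomial (Fin 3) ℂ,
      (∀ w, a1 * D1 w + a2 * D2 w = 0) → a1 = 0 ∧ a2 = 0) ∧
    ({a : MvPolynomial (Fin 3) ℂ | D1 a = 0 ∧ D2 a = 0} =
      (Algebra.adjoin ℂ {(X 2 : MvPolynomial (Fin 3) ℂ)} :
        Subalgebra ℂ (MvPolynomial (Fin 3) ℂ))) ∧
    (∀ α : ℂ,
      (∀ a1 a2 : MvPolynomial (Fin 3) ℂ,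
        (∀ w, a1 * D1 w + a2 * D2 w ∈
          Ideal.span {(X 2 : MvPolynomial (Fin 3) ℂ) - algebraMap ℂ (MvPolynomial (Fin 3) ℂ) α}) →
        a1 ∈ Ideal.span {(X 2 : MvPolynomial (Fin 3) ℂ) - algebraMap ℂ (MvPolynomial (Fin 3) ℂ) α} ∧
        a2 ∈ Ideal.span {(X 2 : MvPolynomial (Fin 3) ℂ) - algebraMap ℂ (MvPolynomial (Fin 3) ℂ) α})
      ↔ α ≠ 0) := by
  obtain rfl : D1 = shear ℂ := hD1
  subst hD2
  exact ⟨shear_pderiv_one_comm, shear_isLocallyNilpotent, pderiv_isLocallyNilpotent 1,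
    shear_pderiv_one_linearIndependent, Set.ext fun _ => shear_eq_zero_and_pderiv_one_eq_zero_iff,
    shear_pderiv_one_linearIndependent_mod_iff⟩
end
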